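/- arXiv:2603.19981 — 3 statements merged into one kernel-verified Lean document; each statement's English description precedes it below -/
import Mathlib

section
/- Let b ≥ 2 and let f : ℕ → Ω be a partial function defined and strictly increasing on [0, b). Define O_f^b : ℕ → ordinals by O_f^b(n) = f(n) if n < b, and O_f^b(n) = Ω^(O_f^b(e)) · f(a) + O_f^b(r) if n ≥ b, where n =_b b^e a + r is the b-decomposition. Then O_f^b is strictly increasing on ℕ. -/
/-- `Ω`, the first uncountable ordinal. -/
noncomputable def Omega : Ordinal := (Cardinal.aleph 1).ord

/-- `n =_b b^e·a + r` is the `b`-decomposition of `n`. -/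
def BDecomp (b n e a r : ℕ) : Prop :=
  n = b ^ e * a + r ∧ b ^ e ≤ n ∧ n < b ^ (e + 1) ∧ 0 < a ∧ a < b ∧ r < b ^ e

/-!
A `b`-decomposition `n = b^e a + r` is read as the Cantor normal form `Ω^(O e) · f a + O r`
to base `Ω`. Since `f a < Ω`, the key estimate is `O k < Ω^(O e)` for every `k < b^e`
(by induction on `e`, provided `O` is already increasing up to `e`); it makes the leading term
dominate, so comparing `O m` with `O n` reduces to the lexicographic comparison of the
decompositions of `m` and `n`, and strong induction on `n` gives strict monotonicity.
-/

open Ordinal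

theorem BDecomp.of_log {b n : ℕ} (hb : 1 < b) (hn : n ≠ 0) :
    BDecomp b n (Nat.log b n) (n / b ^ Nat.log b n) (n % b ^ Nat.log b n) := by
  have hpow_pos : 0 < b ^ Nat.log b n := Nat.pow_pos (by omega)
  have hlt : n < b ^ Nat.log b n * b := pow_succ b _ ▸ Nat.lt_pow_succ_log_self hb n
  exact ⟨(Nat.div_add_mod n _).symm, Nat.pow_log_le_self b hn, Nat.lt_pow_succ_log_self hb n,
    Nat.div_pos (Nat.pow_log_le_self b hn) hpow_pos, Nat.div_lt_of_lt_mul hlt,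
    Nat.mod_lt n hpow_pos⟩

theorem Nat.log_eq_log_of_pow_log_le {b m n : ℕ} (hb : 1 < b) (h : b ^ Nat.log b n ≤ m)
    (hmn : m ≤ n) : Nat.log b m = Nat.log b n :=
  le_antisymm (Nat.log_mono_right hmn) (Nat.le_log_of_pow_le hb h)

theorem Nat.div_lt_div_or_mod_lt_mod_of_lt {m n : ℕ} (d : ℕ) (h : m < n) :
    m / d < n / d ∨ m / d = n / d ∧ m % d < n % d := by
  rcases (Nat.div_le_div_right (c := d) h.le).lt_or_eq with hdiv | hdiv
  · exact Or.inl hdiv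
  · have := Nat.div_add_mod m d
    have := Nat.div_add_mod n d
    refine Or.inr ⟨hdiv, ?_⟩
    rw [hdiv] at *
    omega

section Interpretation

variable {b : ℕ} {f O : ℕ → Ordinal}

theorem lt_Omega_opow_of_lt_pow (hb : 1 < b) (hfΩ : ∀ n < b, f n < Omega)
    (hOsmall : ∀ n < b, O n = f n)
    (hObig : ∀ n e a r, b ≤ n → BDecomp b n e a r → O n = Omega ^ O e * f a + O r)
    {e : ℕ} (hmono : StrictMonoOn O (Set.Iic e)) (he : 0 < e) {k : ℕ} (hk : k < b ^ e) :
    O k < Omega ^ O e := by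
  induction e using Nat.strong_induction_on generalizing k with
  | _ e IH =>
  have hOe : O 0 < O e := hmono (Set.mem_Iic.2 zero_le) Set.self_mem_Iic he
  rcases lt_or_ge k b with hkb | hbk
  · rw [hOsmall k hkb]
    exact (hfΩ k hkb).trans_le (left_le_opow _ (zero_le.trans_lt hOe))
  · have hk0 : k ≠ 0 := by omega
    obtain ⟨-, -, -, -, ha, hr⟩ := BDecomp.of_log hb hk0
    have hde : Nat.log b k < e := Nat.log_lt_of_lt_pow hk0 hk
    rw [hObig k _ _ _ hbk (BDecomp.of_log hb hk0)]
    refine opow_mul_add_lt_opow (hfΩ _ ha) ?_ (hmono (Set.mem_Iic.2 hde.le) Set.self_mem_Iic hde)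
    exact IH _ hde (hmono.mono (Set.Iic_subset_Iic.2 hde.le)) (Nat.log_pos hb hbk) hr

theorem Omega_opow_log_le (hb : 1 < b) (hf : ∀ m n, m < n → n < b → f m < f n)
    (hObig : ∀ n e a r, b ≤ n → BDecomp b n e a r → O n = Omega ^ O e * f a + O r)
    {n : ℕ} (hn : b ≤ n) : Omega ^ O (Nat.log b n) ≤ O n := by
  obtain ⟨-, -, -, ha0, ha, -⟩ := BDecomp.of_log hb (n := n) (by omega)
  rw [hObig n _ _ _ hn (BDecomp.of_log hb (by omega))]
  exact (Ordinal.le_mul_left _ (zero_le.trans_lt (hf 0 _ ha0 ha))).trans le_self_add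

theorem lt_of_strictMonoOn_Iio (hb : 1 < b) (hfΩ : ∀ n < b, f n < Omega)
    (hf : ∀ m n, m < n → n < b → f m < f n) (hOsmall : ∀ n < b, O n = f n)
    (hObig : ∀ n e a r, b ≤ n → BDecomp b n e a r → O n = Omega ^ O e * f a + O r)
    {n : ℕ} (hmono : StrictMonoOn O (Set.Iio n)) {m : ℕ} (hmn : m < n) : O m < O n := by
  rcases lt_or_ge n b with hnb | hbn
  · rw [hOsmall m (hmn.trans hnb), hOsmall n hnb]
    exact hf m n hmn hnb
  have hn0 : n ≠ 0 := by omega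
  set e := Nat.log b n
  have he : 0 < e := Nat.log_pos hb hbn
  have hmono_e : StrictMonoOn O (Set.Iic e) :=
    hmono.mono (Set.Iic_subset_Iio.2 (Nat.log_lt_self b hn0))
  have hbound : ∀ k < b ^ e, O k < Omega ^ O e := fun k hk =>
    lt_Omega_opow_of_lt_pow hb hfΩ hOsmall hObig hmono_e he hk
  rcases lt_or_ge m (b ^ e) with hm | hm
  · exact (hbound m hm).trans_le (Omega_opow_log_le hb hf hObig hbn)
  have hbm : b ≤ m := (Nat.le_self_pow he.ne' b).trans hm
  have hlog : Nat.log b m = e := Nat.log_eq_log_of_pow_log_le hb hm hmn.le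
  obtain ⟨-, -, -, -, ha, hr⟩ := BDecomp.of_log hb hn0
  rw [hObig m _ _ _ hbm (BDecomp.of_log hb (by omega)), hObig n _ _ _ hbn
    (BDecomp.of_log hb hn0), hlog]
  rcases Nat.div_lt_div_or_mod_lt_mod_of_lt (b ^ e) hmn with hdiv | ⟨hdiv, hmod⟩
  · exact (opow_mul_add_lt_opow_mul (hbound _ (Nat.mod_lt _ (by positivity)))
      (hf _ _ hdiv ha)).trans_le le_self_add
  · have hrn : n % b ^ e < n := hr.trans_le (Nat.pow_log_le_self b hn0)
    rw [hdiv]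
    exact add_lt_add_right (hmono (hmod.trans hrn) hrn hmod) _

end Interpretation

/-- if `f` maps `[0,b)` strictly increasingly into `Ω`, then the
ordinal interpretation `O = O_f^b` (characterized by its defining recursion)
is strictly increasing on `ℕ`. -/
theorem stmt1 (b : ℕ) (hb : 2 ≤ b) (f : ℕ → Ordinal)
    (hfOm : ∀ n < b, f n < Omega)
    (hf : ∀ m n, m < n → n < b → f m < f n)
    (O : ℕ → Ordinal)
    (hOsmall : ∀ n < b, O n = f n)
    (hObig : ∀ n e a r, b ≤ n → BDecomp b n e a r →
      O n = Omega ^ O e * f a + O r) :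
    StrictMono O := by
  intro m n hmn
  induction n using Nat.strong_induction_on generalizing m with
  | _ n IH =>
  exact lt_of_strictMonoOn_Iio hb hfOm hf hOsmall hObig
    (fun i _ j hj hij => IH j hj hij) hmn
end

section
/- Let B, C be base hierarchies with min B ≤ min C, and suppose C is a good successor of B. Let b, d ∈ B with b = 2d. Then the upgrade satisfies ↑b = 2·(↑d), where ↑ = ↑_B^C. -/
/-- `c = S_B(b)`, the successor of `b` in `B` (when it exists). -/
def SuccIn (B : Set ℕ) (b c : ℕ) : Prop := IsLeast {x | x ∈ B ∧ b < x} c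

/-- A base hierarchy: a nonempty set of naturals `≥ 2` in which every element
divides its successor (`b ∣ S_B(b)`; vacuous when `S_B(b) = ∞`). -/
def IsBaseHierarchy (B : Set ℕ) : Prop :=
  B.Nonempty ∧ (∀ b ∈ B, 2 ≤ b) ∧ ∀ b ∈ B, ∀ c, SuccIn B b c → b ∣ c

/-- `b = base_B(n)`: the largest element of `B` that is `≤ n`, or `min B` if
`n < min B`. -/
def IsBaseOf (B : Set ℕ) (n b : ℕ) : Prop :=
  ((∃ x ∈ B, x ≤ n) ∧ IsGreatest {x | x ∈ B ∧ x ≤ n} b) ∨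
  ((∀ x ∈ B, n < x) ∧ IsLeast B b)

/-- `n` is `B`-critical if `base_B(n) ∣ n`. -/
def Critical (B : Set ℕ) (n : ℕ) : Prop := ∃ b, IsBaseOf B n b ∧ b ∣ n

/-- If `x ∣ y`, `x < y`, `0 < x` then `2x ≤ y`. -/
private lemma two_mul_le_of_dvd {x y : ℕ} (hx : 0 < x) (hdvd : x ∣ y) (hxy : x < y) :
    2 * x ≤ y := by
  obtain ⟨k, rfl⟩ := hdvd
  have h1 : 1 < k := by
    by_contra h
    push_neg at h
    have h2 : x * k ≤ x * 1 := Nat.mul_le_mul (le_refl x) h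
    rw [mul_one] at h2
    exact absurd hxy (not_lt.mpr h2)
  calc 2 * x = x * 2 := by ring
    _ ≤ x * k := Nat.mul_le_mul (le_refl x) h1

/-- In a base hierarchy, every element divides every larger element. -/
private lemma chain_dvd {C : Set ℕ} (hC : IsBaseHierarchy C) :
    ∀ x ∈ C, ∀ c ∈ C, c ≤ x → c ∣ x := by
  intro x
  induction x using Nat.strong_induction_on with
  | _ x ih =>
    intro hx c hc hcx
    rcases eq_or_lt_of_le hcx with h | h
    · exact h ▸ dvd_refl c
    · have hTne : ({y | y ∈ C ∧ c ≤ y ∧ y < x} : Set ℕ).Nonempty := ⟨c, hc, le_refl c, h⟩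
      have hTbdd : BddAbove {y | y ∈ C ∧ c ≤ y ∧ y < x} := ⟨x, fun y hy => le_of_lt hy.2.2⟩
      obtain ⟨hpC, hcp, hpx⟩ := Nat.sSup_mem hTne hTbdd
      have hsucc : SuccIn C (sSup {y | y ∈ C ∧ c ≤ y ∧ y < x}) x := by
        refine ⟨⟨hx, hpx⟩, ?_⟩
        intro y hy
        by_contra hyx
        push_neg at hyx
        exact absurd (le_csSup hTbdd (⟨hy.1, le_trans hcp (le_of_lt hy.2), hyx⟩ :
          y ∈ {y | y ∈ C ∧ c ≤ y ∧ y < x})) (not_le.mpr hy.2)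
      exact dvd_trans (ih _ hpx hpC c hc hcp) (hC.2.2 _ hpC x hsucc)

/-- if `C` is a good successor of `B` and `b, d ∈ B` with
`b = 2d`, then `↑b = 2·↑d`.  The (total) upgrade `up = ↑_B^C` and the
base-change operators `chg b c = ⌈b→c⌉` are characterized by their defining
equations; goodness of the successor is expressed by `hup_big` (totality and
choice of the least witness), `hmin` (`min B ≤ min C`) and `hgood`. -/
theorem stmt11 (B C : Set ℕ) (hB : IsBaseHierarchy B) (hC : IsBaseHierarchy C)
    (up : ℕ → ℕ) (chg : ℕ → ℕ → ℕ → ℕ)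
    (hup_small : ∀ n, (∀ x ∈ B, n < x) → up n = n)
    (hchg_small : ∀ b c m, m < b → chg b c m = up m)
    (hchg_big : ∀ b c m e a r, b ≤ m → BDecomp b m e a r →
      chg b c m = c ^ chg b c e * up a + chg b c r)
    (hup_big : ∀ n b, (∃ x ∈ B, x ≤ n) → IsBaseOf B n b →
      ∃ c, IsLeast {c' | c' ∈ C ∧ up (n - 1) < chg b c' n ∧
          ∀ d, SuccIn C c' d → chg b c' n < d} c ∧ up n = chg b c n)
    (hmin : ∀ mB mC, IsLeast B mB → IsLeast C mC → mB ≤ mC)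
    (hgood : ∀ b ∈ B, (∀ mB, IsLeast B mB → mB < b) →
      ∀ e d k, IsBaseOf C (up (b - 1)) e → SuccIn C (up (b - 1)) d →
        up (b - 1) < k → k < d → ¬ e ∣ k)
    (b d : ℕ) (hb : b ∈ B) (hd : d ∈ B) (hbd : b = 2 * d) :
    up b = 2 * up d := by
  subst hbd
  obtain ⟨hBne, hB2, hBdvd⟩ := hB
  obtain ⟨hCne, hC2, hCdvd⟩ := hC
  have hd2 : 2 ≤ d := hB2 d hd
  -- small values
  have hup0 : up 0 = 0 := hup_small 0 (fun x hx => lt_of_lt_of_le (by norm_num) (hB2 x hx))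
  have hup1 : up 1 = 1 := hup_small 1 (fun x hx => lt_of_lt_of_le (by norm_num) (hB2 x hx))
  -- strict monotonicity of `up` by one step
  have hmono1 : ∀ n, up n < up (n + 1) := by
    intro n
    by_cases hcase : ∃ x ∈ B, x ≤ n + 1
    · have hSne : ({x | x ∈ B ∧ x ≤ n + 1} : Set ℕ).Nonempty := by
        obtain ⟨x, hx1, hx2⟩ := hcase; exact ⟨x, hx1, hx2⟩
      have hSbdd : BddAbove {x | x ∈ B ∧ x ≤ n + 1} := ⟨n + 1, fun y hy => hy.2⟩
      have hmem := Nat.sSup_mem hSne hSbdd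
      have hbase : IsBaseOf B (n + 1) (sSup {x | x ∈ B ∧ x ≤ n + 1}) :=
        Or.inl ⟨hcase, ⟨hmem, fun y hy => le_csSup hSbdd hy⟩⟩
      obtain ⟨c, hcle, hupeq⟩ := hup_big (n + 1) _ hcase hbase
      have h := hcle.1.2.1
      rw [← hupeq] at h
      simpa using h
    · push_neg at hcase
      rw [hup_small n (fun x hx => lt_of_le_of_lt (Nat.le_succ n) (hcase x hx)),
        hup_small (n + 1) (fun x hx => hcase x hx)]
      omega
  have hmono : ∀ m n, m < n → up m < up n := by
    intro m n h
    induction n with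
    | zero => omega
    | succ k ih =>
      rcases Nat.lt_succ_iff_lt_or_eq.mp h with h' | h'
      · exact lt_trans (ih h') (hmono1 k)
      · exact h' ▸ hmono1 m
  -- base of m is d for d ≤ m < 2d
  have hbase_d : ∀ m, d ≤ m → m < 2 * d → IsBaseOf B m d := by
    intro m hdm hm2d
    refine Or.inl ⟨⟨d, hd, hdm⟩, ⟨⟨hd, hdm⟩, ?_⟩⟩
    intro x hx
    by_contra hxd
    push_neg at hxd
    have hTne : ({y | y ∈ B ∧ d < y} : Set ℕ).Nonempty := ⟨x, hx.1, hxd⟩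
    have hmemT := Nat.sInf_mem hTne
    have hsucc : SuccIn B d (sInf {y | y ∈ B ∧ d < y}) :=
      ⟨hmemT, fun y hy => Nat.sInf_le hy⟩
    have hdvd := hBdvd d hd _ hsucc
    have h2d : 2 * d ≤ sInf {y | y ∈ B ∧ d < y} :=
      two_mul_le_of_dvd (by omega) hdvd hmemT.2
    have hle : sInf {y | y ∈ B ∧ d < y} ≤ x := Nat.sInf_le ⟨hx.1, hxd⟩
    have : x ≤ m := hx.2
    omega
  -- change of base at an element of B
  have hchg_base : ∀ β, β ∈ B → ∀ c, chg β c β = c := by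
    intro β hβ c
    have h2 : 2 ≤ β := hB2 β hβ
    have hdec : BDecomp β β 1 1 0 := by
      refine ⟨by ring, by simp, ?_, one_pos, h2, by simpa using (by omega : 0 < β)⟩
      calc β < β * β := by nlinarith
        _ = β ^ (1 + 1) := by ring
    rw [hchg_big β c β 1 1 0 le_rfl hdec, hchg_small β c 1 (by omega),
      hchg_small β c 0 (by omega), hup1, hup0]
    simp
  -- change of base at d + k for k < d
  have hchg_dk : ∀ c k, k < d → chg d c (d + k) = c + up k := by
    intro c k hk
    have hdec : BDecomp d (d + k) 1 1 k := by
      refine ⟨by ring, by simpa using Nat.le_add_right d k, ?_, one_pos, hd2,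
        by simpa using hk⟩
      rw [pow_succ, pow_one]
      nlinarith
    rw [hchg_big d c (d + k) 1 1 k (Nat.le_add_right d k) hdec,
      hchg_small d c 1 (by omega), hchg_small d c k hk, hup1]
    ring
  -- characterize up d
  have hbased : IsBaseOf B d d := hbase_d d le_rfl (by omega)
  obtain ⟨c, hcleast, hceq⟩ := hup_big d d ⟨d, hd, le_rfl⟩ hbased
  simp only [hchg_base d hd] at hcleast hceq
  have hcC : c ∈ C := hcleast.1.1
  have hdc : up (d - 1) < c := hcleast.1.2.1
  have hc2 : 2 ≤ c := hC2 c hcC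
  -- main induction : up (d + k) = c + up k for k ≤ d - 1
  have hkey : ∀ k, k ≤ d - 1 → up (d + k) = c + up k := by
    intro k
    induction k with
    | zero => intro _; simpa [hup0] using hceq
    | succ k ih =>
      intro hk1
      have ihk := ih (by omega)
      have hbase' : IsBaseOf B (d + (k + 1)) d := hbase_d (d + (k + 1)) (by omega) (by omega)
      obtain ⟨c1, h1least, h1eq⟩ := hup_big (d + (k + 1)) d ⟨d, hd, by omega⟩ hbase'
      have hchg1 : ∀ c', chg d c' (d + (k + 1)) = c' + up (k + 1) :=
        fun c' => hchg_dk c' (k + 1) (by omega)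
      simp only [hchg1] at h1least h1eq
      have hsub : d + (k + 1) - 1 = d + k := by omega
      rw [hsub] at h1least
      have hupk1le : up (k + 1) ≤ up (d - 1) := by
        rcases lt_or_eq_of_le hk1 with h | h
        · exact le_of_lt (hmono _ _ h)
        · rw [h]
      have hcmem : c ∈ {c' | c' ∈ C ∧ up (d + k) < c' + up (k + 1) ∧
          ∀ d', SuccIn C c' d' → c' + up (k + 1) < d'} := by
        refine ⟨hcC, ?_, ?_⟩
        · rw [ihk]
          have := hmono1 k
          omega
        · intro d' hd'
          have hdvd' := hCdvd c hcC d' hd'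
          have hlt : c < d' := hd'.1.2
          have h2c : 2 * c ≤ d' := two_mul_le_of_dvd (by omega) hdvd' hlt
          omega
      have hle : c1 ≤ c := h1least.2 hcmem
      have hge : c ≤ c1 := by
        by_contra hlt
        push_neg at hlt
        have hTne : ({y | y ∈ C ∧ c1 < y} : Set ℕ).Nonempty := ⟨c, hcC, hlt⟩
        have hsucc : SuccIn C c1 (sInf {y | y ∈ C ∧ c1 < y}) :=
          ⟨Nat.sInf_mem hTne, fun y hy => Nat.sInf_le hy⟩
        have h3 := h1least.1.2.2 _ hsucc
        have h4 : sInf {y | y ∈ C ∧ c1 < y} ≤ c := Nat.sInf_le ⟨hcC, hlt⟩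
        have h5 := h1least.1.2.1
        rw [ihk] at h5
        omega
      rw [h1eq, le_antisymm hle hge]
  -- value of up (2d - 1)
  have hu : up (2 * d - 1) = c + up (d - 1) := by
    have h := hkey (d - 1) le_rfl
    rwa [show d + (d - 1) = 2 * d - 1 by omega] at h
  -- characterize up (2d)
  have hbaseb : IsBaseOf B (2 * d) (2 * d) :=
    Or.inl ⟨⟨2 * d, hb, le_rfl⟩, ⟨⟨hb, le_rfl⟩, fun x hx => hx.2⟩⟩
  obtain ⟨c2, h2least, h2eq⟩ := hup_big (2 * d) (2 * d) ⟨2 * d, hb, le_rfl⟩ hbaseb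
  simp only [hchg_base (2 * d) hb] at h2least h2eq
  have hc2C : c2 ∈ C := h2least.1.1
  have huc2 : up (2 * d - 1) < c2 := h2least.1.2.1
  -- c2 is the C-successor of up (2d - 1)
  have hsuccu : SuccIn C (up (2 * d - 1)) c2 := by
    refine ⟨⟨hc2C, huc2⟩, ?_⟩
    intro y hy
    exact h2least.2 ⟨hy.1, hy.2, fun d' hd' => hd'.1.2⟩
  -- c is the C-base of up (2d - 1)
  have hbaseC : IsBaseOf C (up (2 * d - 1)) c := by
    have hcu : c ≤ up (2 * d - 1) := by rw [hu]; omega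
    refine Or.inl ⟨⟨c, hcC, hcu⟩, ⟨⟨hcC, hcu⟩, ?_⟩⟩
    intro x hx
    by_contra hxc
    push_neg at hxc
    have hTne : ({y | y ∈ C ∧ c < y} : Set ℕ).Nonempty := ⟨x, hx.1, hxc⟩
    have hmemT := Nat.sInf_mem hTne
    have hsucc : SuccIn C c (sInf {y | y ∈ C ∧ c < y}) :=
      ⟨hmemT, fun y hy => Nat.sInf_le hy⟩
    have hdvd' := hCdvd c hcC _ hsucc
    have h2c : 2 * c ≤ sInf {y | y ∈ C ∧ c < y} :=
      two_mul_le_of_dvd (by omega) hdvd' hmemT.2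
    have hle : sInf {y | y ∈ C ∧ c < y} ≤ x := Nat.sInf_le ⟨hx.1, hxc⟩
    have hxu : x ≤ up (2 * d - 1) := hx.2
    rw [hu] at hxu
    omega
  -- goodness forces c2 ≤ 2c
  have hminlt : ∀ mB, IsLeast B mB → mB < 2 * d := by
    intro mB hmB
    have : mB ≤ d := hmB.2 hd
    omega
  have hc2le : c2 ≤ 2 * c := by
    by_contra h
    push_neg at h
    have := hgood (2 * d) hb hminlt c c2 (2 * c) hbaseC hsuccu (by rw [hu]; omega) h
    exact this ⟨2, by ring⟩
  -- divisibility forces 2c ≤ c2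
  have hcdvdc2 : c ∣ c2 := chain_dvd ⟨hCne, hC2, hCdvd⟩ c2 hc2C c hcC
    (by have : c ≤ up (2 * d - 1) := by rw [hu]; omega
        omega)
  have hclt : c < c2 := by
    have : c ≤ up (2 * d - 1) := by rw [hu]; omega
    omega
  have hc2ge : 2 * c ≤ c2 := two_mul_le_of_dvd (by omega) hcdvdc2 hclt
  rw [h2eq, hceq]
  omega
end

section
/- Let B, C be base hierarchies with C a good successor of B. Then for all n: (1) n ∈ B if and only if ↑_B^C(n) ∈ C; (2) n is B-critical (i.e. base_B(n) divides n) if and only if ↑_B^C(n) is C-critical. -/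
/-! The hereditary base change `b ↦ c` adds multiples of `c` exactly where the decomposition
of `n` adds multiples of `b`, and digits below `b` go to values below `c` (the upgrade is
strictly increasing and `↑b ∈ C` lies below `↑n`); hence `b ∣ n ↔ c ∣ ↑n`. The defining
inequalities of the upgrade put `↑n` between `c` and `S_C(c)`, so `c` is the `C`-base of `↑n`,
and `↑n ∈ C` means `↑n = c`, which by the base-change formula forces `n = b`. Below `min B` the
upgrade is the identity, and `min B ≤ min C` leaves nothing to check there. -/

lemma BDecomp.exists {b n : ℕ} (hb : 2 ≤ b) (hn : b ≤ n) :
    ∃ e a r, 1 ≤ e ∧ BDecomp b n e a r := by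
  have hb1 : 1 < b := hb
  have hpos : 0 < b ^ Nat.log b n := Nat.pow_pos (by omega)
  have hlt : n < b ^ (Nat.log b n + 1) := Nat.lt_pow_succ_log_self hb1 n
  refine ⟨Nat.log b n, n / b ^ Nat.log b n, n % b ^ Nat.log b n, Nat.log_pos hb1 hn,
    (Nat.div_add_mod n _).symm, Nat.pow_log_le_self b (by omega), hlt,
    Nat.div_pos (Nat.pow_log_le_self b (by omega)) hpos, ?_, Nat.mod_lt _ hpos⟩
  rw [Nat.div_lt_iff_lt_mul hpos, ← pow_succ']
  exact hlt

lemma BDecomp.self {b : ℕ} (hb : 2 ≤ b) : BDecomp b b 1 1 0 :=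
  ⟨by simp, by simp, by rw [pow_succ, pow_one]; nlinarith, one_pos, hb, by simp; omega⟩

section Bases

variable {B : Set ℕ} {n b : ℕ}

lemma exists_isGreatest_le (h : ∃ x ∈ B, x ≤ n) : ∃ b, IsGreatest {x | x ∈ B ∧ x ≤ n} b :=
  BddAbove.exists_isGreatest_of_nonempty ⟨n, fun _ hx => hx.2⟩ h

lemma isGreatest_of_succIn_lt (hb : b ∈ B) (hbn : b ≤ n) (hsucc : ∀ d, SuccIn B b d → n < d) :
    IsGreatest {x | x ∈ B ∧ x ≤ n} b := by
  refine ⟨⟨hb, hbn⟩, fun y ⟨hyB, hyn⟩ => ?_⟩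
  by_contra! hby
  have hd := isLeast_csInf (s := {x | x ∈ B ∧ b < x}) ⟨y, hyB, hby⟩
  have := hd.2 ⟨hyB, hby⟩
  have := hsucc _ hd
  omega

lemma mem_iff_eq_of_isGreatest (h : IsGreatest {x | x ∈ B ∧ x ≤ n} b) : n ∈ B ↔ n = b :=
  ⟨fun hn => le_antisymm (h.2 ⟨hn, le_rfl⟩) h.1.2, fun hn => hn ▸ h.1.1⟩

lemma critical_iff_dvd_of_isGreatest (h : IsGreatest {x | x ∈ B ∧ x ≤ n} b) :
    Critical B n ↔ b ∣ n := by
  refine ⟨?_, fun hd => ⟨b, Or.inl ⟨⟨b, h.1⟩, h⟩, hd⟩⟩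
  rintro ⟨b', (⟨-, hb'⟩ | ⟨hlt, -⟩), hd⟩
  · rwa [hb'.unique h] at hd
  · exact absurd h.1.2 (not_le.2 (hlt b h.1.1))

lemma critical_iff_eq_zero_of_forall_lt (hB : B.Nonempty) (hn : ∀ x ∈ B, n < x) :
    Critical B n ↔ n = 0 := by
  refine ⟨?_, fun h => ⟨sInf B, Or.inr ⟨hn, isLeast_csInf hB⟩, h ▸ dvd_zero _⟩⟩
  rintro ⟨b, (⟨⟨x, hx, hxn⟩, -⟩ | ⟨-, hb⟩), hd⟩
  · exact absurd hxn (not_le.2 (hn x hx))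
  · exact Nat.eq_zero_of_dvd_of_lt hd (hn b hb.1)

end Bases

lemma mem_iff_and_critical_iff_of_forall_lt {B C : Set ℕ} {n : ℕ} (hB : B.Nonempty)
    (hC : C.Nonempty) (hmin : sInf B ≤ sInf C) (hn : ∀ x ∈ B, n < x) :
    (n ∈ B ↔ n ∈ C) ∧ (Critical B n ↔ Critical C n) := by
  have hnC : ∀ x ∈ C, n < x := fun x hx =>
    (hn _ (isLeast_csInf hB).1).trans_le (hmin.trans ((isLeast_csInf hC).2 hx))
  rw [critical_iff_eq_zero_of_forall_lt hB hn, critical_iff_eq_zero_of_forall_lt hC hnC]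
  exact ⟨iff_of_false (fun h => (hn n h).false) (fun h => (hnC n h).false), Iff.rfl⟩

structure IsHereditaryBaseChange (up g : ℕ → ℕ) (b c : ℕ) : Prop where
  apply_of_lt : ∀ m, m < b → g m = up m
  apply_of_bdecomp : ∀ m e a r, b ≤ m → BDecomp b m e a r → g m = c ^ g e * up a + g r

namespace IsHereditaryBaseChange

variable {up g : ℕ → ℕ} {b c : ℕ}

lemma apply_self (hg : IsHereditaryBaseChange up g b c) (hb : 2 ≤ b) (h0 : up 0 = 0) (h1 : up 1 = 1) :
    g b = c := by
  rw [hg.apply_of_bdecomp b 1 1 0 le_rfl (BDecomp.self hb), hg.apply_of_lt 1 (by omega),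
    hg.apply_of_lt 0 (by omega), h0, h1]
  simp

variable (hg : IsHereditaryBaseChange up g b c) (hb : 2 ≤ b) (hc : 2 ≤ c) (hup : ∀ m, m ≤ up m)
include hg hb hc hup

lemma apply_pos {m : ℕ} (hm : 0 < m) : 0 < g m := by
  rcases lt_or_ge m b with hmb | hbm
  · rw [hg.apply_of_lt m hmb]
    exact hm.trans_le (hup m)
  · obtain ⟨e, a, r, -, hd⟩ := BDecomp.exists hb hbm
    rw [hg.apply_of_bdecomp m e a r hbm hd]
    have : 0 < c ^ g e * up a := Nat.mul_pos (by positivity) (hd.2.2.2.1.trans_le (hup a))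
    omega

lemma le_apply {m : ℕ} (hm : b ≤ m) : c ≤ g m := by
  obtain ⟨e, a, r, he, hd⟩ := BDecomp.exists hb hm
  rw [hg.apply_of_bdecomp m e a r hm hd]
  calc c ≤ c ^ g e := Nat.le_self_pow (hg.apply_pos hb hc hup he).ne' c
    _ ≤ c ^ g e * up a := Nat.le_mul_of_pos_right _ (hd.2.2.2.1.trans_le (hup a))
    _ ≤ c ^ g e * up a + g r := Nat.le_add_right _ _

lemma dvd_iff (h0 : up 0 = 0) (hlt : ∀ k < b, up k < c) (m : ℕ) : b ∣ m ↔ c ∣ g m := by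
  induction m using Nat.strong_induction_on with
  | _ m ih =>
    rcases lt_or_ge m b with hmb | hbm
    · rw [hg.apply_of_lt m hmb]
      rcases Nat.eq_zero_or_pos m with rfl | hm
      · simp [h0]
      · exact iff_of_false (fun hd => absurd (Nat.le_of_dvd hm hd) (by omega))
          (fun hd => absurd (Nat.le_of_dvd (hm.trans_le (hup m)) hd) (not_le.2 (hlt m hmb)))
    · obtain ⟨e, a, r, he, hd⟩ := BDecomp.exists hb hbm
      have hre : m = b ^ e * a + r := hd.1
      rw [hg.apply_of_bdecomp m e a r hbm hd, hre,
        Nat.dvd_add_right ((dvd_pow_self b (by omega)).mul_right a),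
        Nat.dvd_add_right ((dvd_pow_self c (hg.apply_pos hb hc hup he).ne').mul_right _)]
      exact ih r (hd.2.2.2.2.2.trans_le hd.2.1)

lemma eq_of_apply_eq {m : ℕ} (hm : b ≤ m) (hgm : g m = c) : m = b := by
  obtain ⟨e, a, r, he, hd⟩ := BDecomp.exists hb hm
  have hre : m = b ^ e * a + r := hd.1
  have ha : 0 < a := hd.2.2.2.1
  rw [hg.apply_of_bdecomp m e a r hm hd] at hgm
  have hge0 := hg.apply_pos hb hc hup he
  have hua : 0 < up a := ha.trans_le (hup a)
  have hpow : c ≤ c ^ g e := Nat.le_self_pow hge0.ne' c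
  have hmul : c ^ g e ≤ c ^ g e * up a := Nat.le_mul_of_pos_right _ hua
  have hr : r = 0 := by
    by_contra hr
    have := hg.apply_pos hb hc hup (Nat.pos_of_ne_zero hr)
    omega
  have hge1 : g e = 1 := by
    by_contra hne
    have : c ^ 2 ≤ c ^ g e := Nat.pow_le_pow_right (by omega) (by omega)
    nlinarith
  have hua1 : up a = 1 := by
    rw [hge1, pow_one] at hmul hgm
    nlinarith
  have he1 : e = 1 := by
    have heb : e < b := by
      by_contra! hbe
      have := hg.le_apply hb hc hup hbe
      omega
    have := hup e
    rw [← hg.apply_of_lt e heb] at this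
    omega
  have ha1 : a = 1 := by have := hup a; omega
  rw [hre, he1, ha1, hr]
  ring

lemma mem_iff_and_critical_iff {B C : Set ℕ} {n : ℕ} (h0 : up 0 = 0) (h1 : up 1 = 1)
    (hbn : IsGreatest {x | x ∈ B ∧ x ≤ n} b) (hcn : IsGreatest {x | x ∈ C ∧ x ≤ g n} c)
    (hlt : ∀ k < b, up k < c) :
    (n ∈ B ↔ g n ∈ C) ∧ (Critical B n ↔ Critical C (g n)) := by
  rw [mem_iff_eq_of_isGreatest hbn, mem_iff_eq_of_isGreatest hcn,
    critical_iff_dvd_of_isGreatest hbn, critical_iff_dvd_of_isGreatest hcn,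
    ← hg.dvd_iff hb hc hup h0 hlt]
  exact ⟨⟨fun h => h ▸ hg.apply_self hb h0 h1, hg.eq_of_apply_eq hb hc hup hbn.1.2⟩, Iff.rfl⟩

end IsHereditaryBaseChange

lemma strictMono_of_eq_self_of_pred_lt {B : Set ℕ} {up : ℕ → ℕ}
    (hsmall : ∀ n, (∀ x ∈ B, n < x) → up n = n)
    (hbig : ∀ n, (∃ x ∈ B, x ≤ n) → up (n - 1) < up n) : StrictMono up := by
  refine strictMono_nat_of_lt_succ fun n => ?_
  by_cases h : ∀ x ∈ B, n + 1 < x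
  · rw [hsmall (n + 1) h, hsmall n fun x hx => by have := h x hx; omega]
    omega
  · push Not at h
    exact hbig (n + 1) h

theorem stmt12_general (B C : Set ℕ) (hB : IsBaseHierarchy B) (hC : IsBaseHierarchy C)
    (up : ℕ → ℕ) (chg : ℕ → ℕ → ℕ → ℕ)
    (hup_small : ∀ n, (∀ x ∈ B, n < x) → up n = n)
    (hchg_small : ∀ b c m, m < b → chg b c m = up m)
    (hchg_big : ∀ b c m e a r, b ≤ m → BDecomp b m e a r →
      chg b c m = c ^ chg b c e * up a + chg b c r)
    (hup_big : ∀ n b, (∃ x ∈ B, x ≤ n) → IsBaseOf B n b →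
      ∃ c, IsLeast {c' | c' ∈ C ∧ up (n - 1) < chg b c' n ∧
          ∀ d, SuccIn C c' d → chg b c' n < d} c ∧ up n = chg b c n)
    (hmin : ∀ mB mC, IsLeast B mB → IsLeast C mC → mB ≤ mC)
    :
    ∀ n : ℕ, (n ∈ B ↔ up n ∈ C) ∧ (Critical B n ↔ Critical C (up n)) := by
  obtain ⟨hBne, hB2, -⟩ := hB
  obtain ⟨hCne, hC2, -⟩ := hC
  have hchg : ∀ b c, IsHereditaryBaseChange up (chg b c) b c :=
    fun b c => ⟨hchg_small b c, hchg_big b c⟩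
  have hup0 : up 0 = 0 := hup_small 0 fun x hx => by have := hB2 x hx; omega
  have hup1 : up 1 = 1 := hup_small 1 fun x hx => by have := hB2 x hx; omega
  have hupgrade : ∀ n, (∃ x ∈ B, x ≤ n) → ∃ b c, IsGreatest {x | x ∈ B ∧ x ≤ n} b ∧ c ∈ C ∧
      up (n - 1) < up n ∧ up n = chg b c n ∧ ∀ d, SuccIn C c d → up n < d := by
    intro n hn
    obtain ⟨b, hb⟩ := exists_isGreatest_le hn
    obtain ⟨c, ⟨⟨hcC, hlt, hsucc⟩, -⟩, hup⟩ := hup_big n b hn (Or.inl ⟨hn, hb⟩)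
    exact ⟨b, c, hb, hcC, hup ▸ hlt, hup, hup ▸ hsucc⟩
  have hmono : StrictMono up := strictMono_of_eq_self_of_pred_lt hup_small fun n hn => by
    obtain ⟨-, -, -, -, hlt, -⟩ := hupgrade n hn
    exact hlt
  have hle : ∀ m, m ≤ up m := fun m => hmono.id_le m
  have hmem : ∀ b ∈ B, up b ∈ C := by
    intro b hb
    obtain ⟨b', c, hb', hcC, -, hup, -⟩ := hupgrade b ⟨b, hb, le_rfl⟩
    obtain rfl := (mem_iff_eq_of_isGreatest hb').1 hb
    rwa [hup, (hchg b c).apply_self (hB2 b hb) hup0 hup1]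
  intro n
  by_cases hsmall : ∀ x ∈ B, n < x
  · rw [hup_small n hsmall]
    exact mem_iff_and_critical_iff_of_forall_lt hBne hCne
      (hmin _ _ (isLeast_csInf hBne) (isLeast_csInf hCne)) hsmall
  · push Not at hsmall
    obtain ⟨b, c, hb, hcC, -, hup, hsucc⟩ := hupgrade n hsmall
    have hb2 := hB2 b hb.1.1
    have hc2 := hC2 c hcC
    have hc : IsGreatest {x | x ∈ C ∧ x ≤ up n} c :=
      isGreatest_of_succIn_lt hcC (hup ▸ (hchg b c).le_apply hb2 hc2 hle hb.1.2) hsucc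
    have hlt : ∀ k < b, up k < c := fun k hk =>
      (hmono hk).trans_le (hc.2 ⟨hmem b hb.1.1, hmono.monotone hb.1.2⟩)
    rw [hup] at hc ⊢
    exact (hchg b c).mem_iff_and_critical_iff hb2 hc2 hle hup0 hup1 hb hc hlt

/-- if `C` is a good successor of `B`, then for all `n`:
`n ∈ B ↔ ↑n ∈ C`, and `n` is `B`-critical iff `↑n` is `C`-critical. -/
theorem stmt12 (B C : Set ℕ) (hB : IsBaseHierarchy B) (hC : IsBaseHierarchy C)
    (up : ℕ → ℕ) (chg : ℕ → ℕ → ℕ → ℕ)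
    (hup_small : ∀ n, (∀ x ∈ B, n < x) → up n = n)
    (hchg_small : ∀ b c m, m < b → chg b c m = up m)
    (hchg_big : ∀ b c m e a r, b ≤ m → BDecomp b m e a r →
      chg b c m = c ^ chg b c e * up a + chg b c r)
    (hup_big : ∀ n b, (∃ x ∈ B, x ≤ n) → IsBaseOf B n b →
      ∃ c, IsLeast {c' | c' ∈ C ∧ up (n - 1) < chg b c' n ∧
          ∀ d, SuccIn C c' d → chg b c' n < d} c ∧ up n = chg b c n)
    (hmin : ∀ mB mC, IsLeast B mB → IsLeast C mC → mB ≤ mC)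
    (hgood : ∀ b ∈ B, (∀ mB, IsLeast B mB → mB < b) →
      ∀ e d k, IsBaseOf C (up (b - 1)) e → SuccIn C (up (b - 1)) d →
        up (b - 1) < k → k < d → ¬ e ∣ k)
    :
    ∀ n : ℕ, (n ∈ B ↔ up n ∈ C) ∧ (Critical B n ↔ Critical C (up n)) :=
  stmt12_general B C hB hC up chg hup_small hchg_small hchg_big hup_big hmin
end
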